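/- Let M be an R-module and let F = R/m be the residue field of R, regarded as an R-module. Then for every n ≥ 2 there is an isomorphism Tor_{n+2}^R(M, F) ≅ Tor_n^R(M, F). -/

import Mathlib

open Polynomial CategoryTheory

noncomputable section

/-- The field `F = ℤ/2ℤ`. -/
abbrev Fld := ZMod 2

/-- The polynomial ring `F[[V]][Q]` (polynomials in `Q` over the power series ring `F[[V]]`). -/
abbrev Rpoly := Polynomial (PowerSeries Fld)

/-- The ring `R = F[[V]][Q]/(Q³)`. -/
abbrev Rring := Rpoly ⧸ Ideal.span ({(X : Rpoly) ^ 3} : Set Rpoly)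

instance Rring.instCommRing : CommRing Rring := Ideal.Quotient.commRing _

/-- `Q`, the image in `R` of the polynomial variable. -/
def Qe : Rring := Ideal.Quotient.mk (Ideal.span ({(X : Rpoly) ^ 3} : Set Rpoly)) (X : Rpoly)

/-- `V`, the image in `R` of the power series variable. -/
def Ve : Rring := Ideal.Quotient.mk (Ideal.span ({(X : Rpoly) ^ 3} : Set Rpoly)) (C PowerSeries.X)
/-- The maximal ideal `m = (Q, V)` of `R`. -/
def mIdeal : Ideal Rring := Ideal.span {Qe, Ve}

/-- The residue field `F = R/m`, regarded as an `R`-module. -/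
def resF : ModuleCat Rring := ModuleCat.of Rring (Rring ⧸ mIdeal)

/-!
Write `q` for the class of `X` in `R = A[X]/(X³)` and let `t ∈ A` be a non-zero-divisor.
The module `R/(q, t)` has the free resolution `R ← R² ← R² ← R² ← ⋯` whose first differential
is `(q t)` and whose later ones alternate between `[[q², t], [0, -q]]` and
`[[q, t], [0, -q²]]`. These two matrices form a matrix factorization of `q³ = 0` (their
products in either order are `q³ • 1`), which gives `d² = 0`; exactness is a comparison of
coefficients in the `A`-basis `1, q, q²` of `R`. The differentials are 2-periodic from degree 2
on, so after applying any additive functor, e.g. `M ⊗ -`, the homology in degrees `≥ 2` is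
2-periodic. For `A = F[[V]]` and `t = V`, `R/(q, t)` is the residue field of `R`.
-/
universe u

namespace CategoryTheory.ProjectiveResolution

variable {C D : Type*} [Category C] [Category D] [Abelian C] [Abelian D] {Y : C}

def ofExact (P : ChainComplex C ℕ) [∀ n, Projective (P.X n)] (π : P.X 0 ⟶ Y)
    (w : P.d 1 0 ≫ π = 0) (exact₀ : (ShortComplex.mk _ _ w).Exact) [hπ : Epi π]
    (exactAt : ∀ n, P.ExactAt (n + 1)) : ProjectiveResolution Y where
  complex := P
  π := (ChainComplex.toSingle₀Equiv _ _).symm ⟨π, w⟩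
  quasiIso := ⟨fun n ↦ by
    rcases n with _ | n
    · rw [ChainComplex.quasiIsoAt₀_iff, ShortComplex.quasiIso_iff_of_zeros']
      · simp only [HomologicalComplex.shortComplexFunctor'_map_τ₂,
          ChainComplex.toSingle₀Equiv_symm_apply_f_zero]
        exact ⟨exact₀, hπ⟩
      · exact P.shape _ _ (by simp)
      all_goals rfl
    · rw [quasiIsoAt_iff_exactAt' _ _ (ChainComplex.exactAt_succ_single_obj _ _)]
      exact exactAt n⟩

def leftDerivedObjIsoOfScEq [HasProjectiveResolutions C] (P : ProjectiveResolution Y)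
    (F : C ⥤ D) [F.Additive] {i j : ℕ}
    (h : P.complex.sc' (i + 2) (i + 1) i = P.complex.sc' (j + 2) (j + 1) j) :
    (F.leftDerived (i + 1)).obj Y ≅ (F.leftDerived (j + 1)).obj Y :=
  let K := (F.mapHomologicalComplex _).obj P.complex
  P.isoLeftDerivedObj F (i + 1) ≪≫ K.homologyIsoSc' (i + 2) (i + 1) i (by simp) (by simp) ≪≫
    eqToIso (congrArg (fun S ↦ (F.mapShortComplex.obj S).homology) h) ≪≫
    (K.homologyIsoSc' (j + 2) (j + 1) j (by simp) (by simp)).symm ≪≫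
    (P.isoLeftDerivedObj F (j + 1)).symm

end CategoryTheory.ProjectiveResolution

abbrev TruncPoly (A : Type u) [CommRing A] : Type u := A[X] ⧸ Ideal.span {(X : A[X]) ^ 3}

namespace TruncPoly

variable {A : Type u} [CommRing A]

def q : TruncPoly A := Ideal.Quotient.mk _ X

def const : A →+* TruncPoly A := (Ideal.Quotient.mk _).comp C

lemma q_pow_three : (q : TruncPoly A) ^ 3 = 0 :=
  Ideal.Quotient.eq_zero_iff_mem.2 (Ideal.subset_span rfl)

lemma mk_eq_const_add (a b c : A) : Ideal.Quotient.mk _ (C a + C b * X + C c * X ^ 2) =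
    const a + const b * (q : TruncPoly A) + const c * q ^ 2 := by
  simp [const, q]

lemma exists_eq_const_add (x : TruncPoly A) :
    ∃ a b c : A, x = const a + const b * q + const c * q ^ 2 := by
  obtain ⟨p, rfl⟩ := Ideal.Quotient.mk_surjective x
  refine ⟨p.coeff 0, p.coeff 1, p.coeff 2, ?_⟩
  rw [← mk_eq_const_add, Ideal.Quotient.mk_eq_mk_iff_sub_mem, Ideal.mem_span_singleton,
    X_pow_dvd_iff]
  intro d hd
  interval_cases d <;> simp [coeff_X, coeff_C]

lemma eq_zero_of_const_add_eq_zero {a b c : A}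
    (h : const a + const b * q + const c * (q : TruncPoly A) ^ 2 = 0) :
    a = 0 ∧ b = 0 ∧ c = 0 := by
  rw [← mk_eq_const_add, Ideal.Quotient.eq_zero_iff_mem, Ideal.mem_span_singleton,
    X_pow_dvd_iff] at h
  refine ⟨?_, ?_, ?_⟩
  · simpa using h 0 (by norm_num)
  · simpa [coeff_X, coeff_C] using h 1 (by norm_num)
  · simpa [coeff_X, coeff_C] using h 2 (by norm_num)

variable (t : A)

lemma exists_of_q_mul_add_eq_zero (ht : IsLeftRegular t) {a b : TruncPoly A}
    (h : q * a + const t * b = 0) : ∃ x y, q ^ 2 * x + const t * y = a ∧ -(q * y) = b := by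
  obtain ⟨a₀, a₁, a₂, rfl⟩ := exists_eq_const_add a
  obtain ⟨b₀, b₁, b₂, rfl⟩ := exists_eq_const_add b
  obtain ⟨hb₀, ha₀, ha₁⟩ := eq_zero_of_const_add_eq_zero (a := t * b₀) (b := a₀ + t * b₁)
    (c := a₁ + t * b₂) (by
      simp only [map_add, map_mul]
      linear_combination h - const a₂ * q_pow_three (A := A))
  rw [ht.mul_left_eq_zero_iff] at hb₀
  refine ⟨const a₂, -(const b₁ + const b₂ * q), ?_, ?_⟩
  · rw [eq_neg_of_add_eq_zero_left ha₀, eq_neg_of_add_eq_zero_left ha₁]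
    simp only [map_neg, map_mul]
    ring
  · simp only [hb₀, map_zero]
    ring

lemma exists_of_q_sq_mul_add_eq_zero {a b : TruncPoly A} (h : q ^ 2 * a + const t * b = 0)
    (hb : q * b = 0) : ∃ x y, q * x + const t * y = a ∧ -(q ^ 2 * y) = b := by
  obtain ⟨a₀, a₁, a₂, rfl⟩ := exists_eq_const_add a
  obtain ⟨b₀, b₁, b₂, rfl⟩ := exists_eq_const_add b
  obtain ⟨-, hb₀, hb₁⟩ := eq_zero_of_const_add_eq_zero (a := 0) (b := b₀) (c := b₁)
    (by simp only [map_zero]; linear_combination hb - const b₂ * q_pow_three (A := A))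
  obtain ⟨-, -, ha₀⟩ := eq_zero_of_const_add_eq_zero (a := t * b₀) (b := t * b₁)
    (c := a₀ + t * b₂) (by
      simp only [map_add, map_mul]
      linear_combination h - (const a₁ + const a₂ * q) * q_pow_three (A := A))
  refine ⟨const a₁ + const a₂ * q, -const b₂, ?_, ?_⟩
  · rw [eq_neg_of_add_eq_zero_left ha₀]
    simp only [map_neg, map_mul]
    ring
  · simp only [hb₀, hb₁, map_zero]
    ring

def linComb : TruncPoly A × TruncPoly A →ₗ[TruncPoly A] TruncPoly A :=
  (q : TruncPoly A) • LinearMap.fst _ _ (TruncPoly A) +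
    const t • LinearMap.snd _ (TruncPoly A) _

def factorMat (a b : TruncPoly A) :
    TruncPoly A × TruncPoly A →ₗ[TruncPoly A] TruncPoly A × TruncPoly A :=
  LinearMap.prod
    (a • LinearMap.fst _ _ (TruncPoly A) + const t • LinearMap.snd _ (TruncPoly A) _)
    (-(b • LinearMap.snd _ (TruncPoly A) _))

@[simp]
lemma linComb_apply (z : TruncPoly A × TruncPoly A) : linComb t z = q * z.1 + const t * z.2 :=
  rfl

@[simp]
lemma factorMat_apply (a b : TruncPoly A) (z : TruncPoly A × TruncPoly A) :
    factorMat t a b z = (a * z.1 + const t * z.2, -(b * z.2)) :=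
  rfl

lemma linComb_comp_factorMat : linComb t ∘ₗ factorMat t (q ^ 2) q = 0 := by
  refine LinearMap.ext fun z ↦ ?_
  simp only [LinearMap.comp_apply, factorMat_apply, linComb_apply, LinearMap.zero_apply]
  linear_combination z.1 * q_pow_three (A := A)

lemma factorMat_comp_factorMat {a b : TruncPoly A} (h : a * b = 0) :
    factorMat t a b ∘ₗ factorMat t b a = 0 := by
  refine LinearMap.ext fun z ↦ ?_
  simp only [LinearMap.comp_apply, factorMat_apply, LinearMap.zero_apply, Prod.mk_eq_zero]
  constructor
  · linear_combination z.1 * h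
  · linear_combination z.2 * h

lemma ker_linComb_le (ht : IsLeftRegular t) :
    LinearMap.ker (linComb t) ≤ LinearMap.range (factorMat t (q ^ 2) q) := fun _ hz ↦
  have ⟨x, y, hx, hy⟩ := exists_of_q_mul_add_eq_zero t ht hz
  ⟨(x, y), Prod.ext hx hy⟩

lemma ker_factorMat_q_sq_le :
    LinearMap.ker (factorMat t (q ^ 2) q) ≤ LinearMap.range (factorMat t q (q ^ 2)) :=
  fun _ hz ↦
  have ⟨x, y, hx, hy⟩ := exists_of_q_sq_mul_add_eq_zero t (congrArg Prod.fst hz)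
    (neg_eq_zero.1 (congrArg Prod.snd hz))
  ⟨(x, y), Prod.ext hx hy⟩

lemma ker_factorMat_q_le (ht : IsLeftRegular t) :
    LinearMap.ker (factorMat t q (q ^ 2)) ≤ LinearMap.range (factorMat t (q ^ 2) q) :=
  fun _ hz ↦ ker_linComb_le t ht (congrArg Prod.fst hz)

def resolutionX : ℕ → ModuleCat.{u} (TruncPoly A)
  | 0 => .of _ (TruncPoly A)
  | _ + 1 => .of _ (TruncPoly A × TruncPoly A)

def resolutionD : ∀ n, resolutionX (A := A) (n + 1) ⟶ resolutionX n
  | 0 => ModuleCat.ofHom (linComb t)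
  | 1 => ModuleCat.ofHom (factorMat t (q ^ 2) q)
  | 2 => ModuleCat.ofHom (factorMat t q (q ^ 2))
  | n + 3 => resolutionD (n + 1)

lemma resolutionD_comp : ∀ n, resolutionD t (n + 1) ≫ resolutionD t n = 0
  | 0 => congrArg ModuleCat.ofHom (linComb_comp_factorMat t)
  | 1 => congrArg ModuleCat.ofHom (factorMat_comp_factorMat t (by rw [← pow_succ, q_pow_three]))
  | 2 => congrArg ModuleCat.ofHom (factorMat_comp_factorMat t (by rw [← pow_succ', q_pow_three]))
  | n + 3 => resolutionD_comp (n + 1)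

def resolutionComplex : ChainComplex (ModuleCat.{u} (TruncPoly A)) ℕ :=
  ChainComplex.of resolutionX (resolutionD t) (resolutionD_comp t)

@[simp]
lemma resolutionComplex_d (n : ℕ) : (resolutionComplex t).d (n + 1) n = resolutionD t n :=
  ChainComplex.of_d _ _ _

lemma ker_resolutionD_le (ht : IsLeftRegular t) :
    ∀ n, LinearMap.ker (resolutionD t n).hom ≤ LinearMap.range (resolutionD t (n + 1)).hom
  | 0 => ker_linComb_le t ht
  | 1 => ker_factorMat_q_sq_le t
  | 2 => ker_factorMat_q_le t ht
  | n + 3 => ker_resolutionD_le ht (n + 1)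

lemma resolutionComplex_exactAt (ht : IsLeftRegular t) (n : ℕ) :
    (resolutionComplex t).ExactAt (n + 1) := by
  rw [HomologicalComplex.exactAt_iff' _ (n + 2) (n + 1) n (by simp) (by simp),
    ShortComplex.moduleCat_exact_iff_ker_sub_range]
  simp only [HomologicalComplex.shortComplexFunctor'_obj_f,
    HomologicalComplex.shortComplexFunctor'_obj_g, resolutionComplex_d]
  exact ker_resolutionD_le t ht n

instance : ∀ n, Projective (resolutionX (A := A) n)
  | 0 => (ModuleCat.of _ (TruncPoly A)).projective_of_categoryTheory_projective
  | _ + 1 => (ModuleCat.of _ (TruncPoly A × TruncPoly A)).projective_of_categoryTheory_projective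

instance (n : ℕ) : Projective ((resolutionComplex t).X n) :=
  inferInstanceAs (Projective (resolutionX n))

lemma range_linComb_eq_ker_mkQ :
    LinearMap.range (linComb t) = LinearMap.ker (Ideal.span {q, const t}).mkQ := by
  ext x
  simp [Ideal.mem_span_pair, mul_comm, eq_comm]

def resolution (ht : IsLeftRegular t) :
    ProjectiveResolution (ModuleCat.of (TruncPoly A) (TruncPoly A ⧸ Ideal.span {q, const t})) :=
  ProjectiveResolution.ofExact (resolutionComplex t) (ModuleCat.ofHom (Submodule.mkQ _))
    (by
      rw [resolutionComplex_d]
      exact congrArg ModuleCat.ofHom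
        (LinearMap.range_le_ker_iff.1 (range_linComb_eq_ker_mkQ t).le))
    (by
      rw [ShortComplex.moduleCat_exact_iff_range_eq_ker]
      exact range_linComb_eq_ker_mkQ t)
    (resolutionComplex_exactAt t ht)
    (hπ := (ModuleCat.epi_iff_surjective _).2 (Submodule.mkQ_surjective _))

lemma resolutionComplex_sc'_periodic (n : ℕ) :
    (resolutionComplex t).sc' (n + 5) (n + 4) (n + 3) =
      (resolutionComplex t).sc' (n + 3) (n + 2) (n + 1) := by
  change ShortComplex.mk _ _ _ = ShortComplex.mk _ _ _
  congr 1 <;> simp only [resolutionComplex_d] <;> rfl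

end TruncPoly

/-- For every `R`-module `M` and every `n ≥ 2`,
`Tor_{n+2}^R(M, F) ≅ Tor_n^R(M, F)`. -/
theorem stmt9 (M : Type) [AddCommGroup M] [Module Rring M] :
    ∀ n : ℕ, 2 ≤ n →
      Nonempty ((((Tor (ModuleCat Rring) (n + 2)).obj (ModuleCat.of Rring M)).obj resF) ≅
        (((Tor (ModuleCat Rring) n).obj (ModuleCat.of Rring M)).obj resF)) := by
  intro n hn
  obtain ⟨k, rfl⟩ := Nat.exists_eq_add_of_le' hn
  have hV : IsLeftRegular (PowerSeries.X : PowerSeries Fld) :=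
    (IsRegular.of_ne_zero PowerSeries.X_ne_zero).left
  exact ⟨(TruncPoly.resolution _ hV).leftDerivedObjIsoOfScEq _
    (TruncPoly.resolutionComplex_sc'_periodic _ k)⟩
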